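/- Suppose ω^1, …, ω^n are smooth 1-forms on ℝ^m satisfying the structure equations of 𝔤 in the basis β, and suppose f : ℝ^m → ℝ is a smooth function with df = ω^n. Define 1-forms ω̂^1, …, ω̂^n by ω̂^i(x) = Σ_j exp(f(x)·[ad(e_n)])^i_j · ω^j(x), where exp denotes the matrix exponential. Then ω̂^n = ω^n, dω̂^n = 0, and for a = 1, …, n−1: dω̂^a + (1/2) Σ_{b,c=1}^{n−1} C^a_{bc} ω̂^b ∧ ω̂^c = 0; that is, ω̂^1, …, ω̂^{n−1} satisfy the structure equations of the (n−1)-dimensional Lie algebra 𝔨 in the basis (e_1, …, e_{n−1}). -/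

import Mathlib

open scoped BigOperators

noncomputable section

/-- The matrix exponential. -/
def matExp {k : ℕ} (A : Matrix (Fin k) (Fin k) ℝ) : Matrix (Fin k) (Fin k) ℝ :=
  NormedSpace.exp A

/-- Exterior derivative of a smooth 1-form, evaluated at `x` on vectors `u, v`. -/
def extDerivOneForm {E : Type*} [NormedAddCommGroup E] [NormedSpace ℝ E]
    (ω : E → E →L[ℝ] ℝ) (x u v : E) : ℝ :=
  fderiv ℝ ω x u v - fderiv ℝ ω x v u

/-- Wedge product of two 1-forms, evaluated at `x` on vectors `u, v`. -/
def wedge {E : Type*} [NormedAddCommGroup E] [NormedSpace ℝ E]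
    (α β : E → E →L[ℝ] ℝ) (x u v : E) : ℝ :=
  α x u * β x v - α x v * β x u

/-- The 1-forms `ω i` satisfy the structure equations with structure constants `C`:
`dωⁱ + (1/2) Σ_{j,k} Cⁱ_{jk} ωʲ ∧ ωᵏ = 0`. -/
def StructEq {E : Type*} [NormedAddCommGroup E] [NormedSpace ℝ E] {n : ℕ}
    (C : Fin n → Fin n → Fin n → ℝ) (ω : Fin n → E → E →L[ℝ] ℝ) : Prop :=
  ∀ i x u v, extDerivOneForm (ω i) x u v
    + (1 / 2) * ∑ j, ∑ k, C i j k * wedge (ω j) (ω k) x u v = 0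

/-- The matrix of `ad(e_i)` in the basis `e`: its `(a,b)` entry is `C a i b`, where
`⁅e_j, e_k⁆ = Σ_i C i j k • e_i`. -/
def adMat {n : ℕ} (C : Fin n → Fin n → Fin n → ℝ) (i : Fin n) :
    Matrix (Fin n) (Fin n) ℝ := fun a b => C a i b

end

/-!
Since `𝔨` is an ideal, the last row of `N = [ad(eₙ)]` vanishes, so `exp(f N)` fixes the last
coordinate: `ω̂ⁿ = ωⁿ = df`, which is closed. Since `ad(eₙ)` is a derivation of `𝔤`, `exp(t N)`
preserves the structure constants, and differentiating `ω̂ = exp(f N) ω` gives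
`dω̂ + ½ Σ C ω̂ ∧ ω̂ = N (df ∧ ω̂)`. As `df = ω̂ⁿ`, the right-hand side is exactly the part of
`½ Σ C ω̂ ∧ ω̂` in which one of the two indices is `n`; what remains are the structure equations
of `𝔨`.
-/

open Finset

section StructureConstants

variable {n : ℕ} {L : Type*} [LieRing L] [LieAlgebra ℝ L] (B : Module.Basis (Fin n) ℝ L)
  {C : Fin n → Fin n → Fin n → ℝ}

theorem repr_lie_basis_basis (hC : ∀ j k, ⁅B j, B k⁆ = ∑ i, C i j k • B i) (i j k : Fin n) :
    B.repr ⁅B j, B k⁆ i = C i j k := by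
  rw [hC, B.repr_sum_self]

theorem structConst_swap (hC : ∀ j k, ⁅B j, B k⁆ = ∑ i, C i j k • B i) (i j k : Fin n) :
    C i k j = -C i j k := by
  rw [← repr_lie_basis_basis B hC, ← repr_lie_basis_basis B hC, ← lie_skew, map_neg,
    Finsupp.neg_apply]

theorem repr_basis_lie (hC : ∀ j k, ⁅B j, B k⁆ = ∑ i, C i j k • B i) (j : Fin n) (y : L)
    (i : Fin n) : B.repr ⁅B j, y⁆ i = ∑ k, B.repr y k * C i j k := by
  conv_lhs => rw [← B.sum_repr y]
  simp only [lie_sum, lie_smul, map_sum, map_smul, Finsupp.coe_finsetSum, Finset.sum_apply,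
    Finsupp.smul_apply, repr_lie_basis_basis B hC, smul_eq_mul]

theorem repr_lie_basis (hC : ∀ j k, ⁅B j, B k⁆ = ∑ i, C i j k • B i) (y : L) (k : Fin n)
    (i : Fin n) : B.repr ⁅y, B k⁆ i = ∑ j, B.repr y j * C i j k := by
  rw [← lie_skew, map_neg, Finsupp.neg_apply, repr_basis_lie B hC, ← sum_neg_distrib]
  simp only [structConst_swap B hC i k, mul_neg]

/-- `N` is a derivation of the bracket with structure constants `C`:
`N⁅x, y⁆ = ⁅Nx, y⁆ + ⁅x, Ny⁆`. -/
def IsStructDerivation {k : ℕ} (C : Fin k → Fin k → Fin k → ℝ) (N : Matrix (Fin k) (Fin k) ℝ) :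
    Prop :=
  ∀ i p q, ∑ j, N i j * C j p q = ∑ b, N b p * C i b q + ∑ c, N c q * C i p c

theorem isStructDerivation_adMat (hC : ∀ j k, ⁅B j, B k⁆ = ∑ i, C i j k • B i) (ν : Fin n) :
    IsStructDerivation C (adMat C ν) := by
  intro i p q
  have h := congrArg (fun z => B.repr z i) (leibniz_lie (B ν) (B p) (B q))
  rw [map_add, Finsupp.add_apply, repr_basis_lie B hC, repr_lie_basis B hC,
    repr_basis_lie B hC] at h
  simp only [repr_lie_basis_basis B hC] at h
  simp only [adMat]
  rw [← h]
  exact sum_congr rfl fun _ _ => mul_comm _ _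

theorem structConst_eq_zero_of_codim_one_ideal (hC : ∀ j k, ⁅B j, B k⁆ = ∑ i, C i j k • B i)
    {S : Set (Fin n)} {ν : Fin n} (hS : ∀ i, i ∉ S ↔ i = ν)
    (hideal : ∀ x y : L, y ∈ Submodule.span ℝ (B '' S) → ⁅x, y⁆ ∈ Submodule.span ℝ (B '' S))
    (j k : Fin n) : C ν j k = 0 := by
  have hmem : ∀ k ∈ S, ∀ j, C ν j k = 0 := fun k hk j => by
    have h := B.mem_span_image.1 (hideal (B j) _ (Submodule.subset_span ⟨k, hk, rfl⟩))
    rw [← repr_lie_basis_basis B hC, ← Finsupp.notMem_support_iff]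
    exact fun hν => (hS ν).2 rfl (h hν)
  by_cases hk : k ∈ S
  · exact hmem k hk j
  obtain rfl := (hS k).1 hk
  by_cases hj : j ∈ S
  · rw [structConst_swap B hC, hmem j hj, neg_zero]
  obtain rfl := (hS j).1 hj
  linarith [structConst_swap B hC j j j]

end StructureConstants

section MatrixExponential

open scoped Matrix.Norms.Operator

variable {k : ℕ}

theorem hasDerivAt_matExp_smul (N : Matrix (Fin k) (Fin k) ℝ) (t : ℝ) :
    HasDerivAt (fun s : ℝ => matExp (s • N)) (N * matExp (t • N)) t :=
  hasDerivAt_exp_smul_const' N t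

theorem hasDerivAt_matExp_smul_apply (N : Matrix (Fin k) (Fin k) ℝ) (t : ℝ) (i j : Fin k) :
    HasDerivAt (fun s : ℝ => matExp (s • N) i j) ((N * matExp (t • N)) i j) t :=
  (Matrix.entryLinearMap ℝ ℝ i j).toContinuousLinearMap.hasFDerivAt.comp_hasDerivAt t
    (hasDerivAt_matExp_smul N t)

theorem matExp_zero : matExp (0 : Matrix (Fin k) (Fin k) ℝ) = 1 :=
  NormedSpace.exp_zero

theorem commute_matExp_smul (N : Matrix (Fin k) (Fin k) ℝ) (t : ℝ) :
    Commute N (matExp (t • N)) :=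
  ((Commute.refl N).smul_right t).exp_right

theorem matExp_smul_mul_matExp_neg_smul (N : Matrix (Fin k) (Fin k) ℝ) (t : ℝ) :
    matExp (t • N) * matExp ((-t) • N) = 1 := by
  have hcomm : Commute (t • N) ((-t) • N) := ((Commute.refl N).smul_left t).smul_right _
  rw [matExp, matExp, ← Matrix.exp_add_of_commute _ _ hcomm, ← add_smul, add_neg_cancel,
    zero_smul, ← matExp, matExp_zero]

theorem matExp_smul_apply_of_row_eq_zero (N : Matrix (Fin k) (Fin k) ℝ) {a : Fin k}
    (hN : ∀ b, N a b = 0) (t : ℝ) (b : Fin k) : matExp (t • N) a b = (1 : Matrix _ _ ℝ) a b := by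
  have hd : ∀ s, HasDerivAt (fun s : ℝ => matExp (s • N) a b) 0 s := fun s => by
    simpa [Matrix.mul_apply, hN] using hasDerivAt_matExp_smul_apply N s a b
  rw [is_const_of_deriv_eq_zero (fun s => (hd s).differentiableAt) (fun s => (hd s).deriv) t 0,
    zero_smul, matExp_zero]

theorem eq_sum_matExp_smul_of_hasDerivAt {X : Type*} [NormedAddCommGroup X] [NormedSpace ℝ X]
    (N : Matrix (Fin k) (Fin k) ℝ) {V : ℝ → Fin k → X}
    (hV : ∀ s i, HasDerivAt (fun s => V s i) (∑ j, N i j • V s j) s) (t : ℝ) (i : Fin k) :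
    V t i = ∑ j, matExp (t • N) i j • V 0 j := by
  set G : ℝ → Fin k → X := fun s i => ∑ j, matExp ((-s) • N) i j • V s j
  have hG : ∀ s i, HasDerivAt (fun s => G s i) 0 s := fun s i => by
    have hterm : ∀ j, HasDerivAt (fun s => matExp ((-s) • N) i j • V s j)
        (matExp ((-s) • N) i j • ∑ l, N j l • V s l
          + ((N * matExp ((-s) • N)) i j * -1) • V s j) s := fun j =>
      ((hasDerivAt_matExp_smul_apply N (-s) i j).comp s (hasDerivAt_neg s)).smul (hV s j)
    refine (HasDerivAt.fun_sum fun j _ => hterm j).congr_deriv ?_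
    simp only [smul_sum, smul_smul, mul_neg_one, neg_smul, sum_add_distrib, sum_neg_distrib]
    rw [sum_comm, ← sub_eq_add_neg, sub_eq_zero]
    simp only [← sum_smul, ← Matrix.mul_apply]
    rw [← neg_smul, (commute_matExp_smul N (-s)).eq]
  have hGconst : ∀ s i, G s i = V 0 i := fun s i => by
    rw [is_const_of_deriv_eq_zero (fun s => (hG s i).differentiableAt)
      (fun s => (hG s i).deriv) s 0]
    simp [G, matExp_zero, Matrix.one_apply]
  calc V t i = ∑ l, (matExp (t • N) * matExp ((-t) • N)) i l • V t l := by
        rw [matExp_smul_mul_matExp_neg_smul]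
        simp [Matrix.one_apply]
    _ = ∑ j, matExp (t • N) i j • G t j := by
        simp only [G, Matrix.mul_apply, sum_smul, smul_sum, smul_smul]
        exact sum_comm
    _ = ∑ j, matExp (t • N) i j • V 0 j := by simp only [hGconst]

end MatrixExponential

section Automorphism

open scoped Matrix Matrix.Norms.Operator

variable {k : ℕ} {C : Fin k → Fin k → Fin k → ℝ} {N : Matrix (Fin k) (Fin k) ℝ}

theorem IsStructDerivation.transpose_mul_add_mul (hN : IsStructDerivation C N) (i : Fin k) :
    Nᵀ * Matrix.of (C i) + Matrix.of (C i) * N = ∑ j, N i j • Matrix.of (C j) := by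
  ext p q
  simp only [Matrix.add_apply, Matrix.mul_apply, Matrix.transpose_apply, Matrix.of_apply,
    Matrix.sum_apply, Matrix.smul_apply, smul_eq_mul]
  simpa only [mul_comm, eq_comm] using hN i p q

/-- The exponential of a derivation is an automorphism of the bracket. -/
theorem IsStructDerivation.transpose_matExp_mul_mul_matExp (hN : IsStructDerivation C N)
    (t : ℝ) (i : Fin k) :
    (matExp (t • N))ᵀ * Matrix.of (C i) * matExp (t • N)
      = ∑ j, matExp (t • N) i j • Matrix.of (C j) := by
  have htr : ∀ s : ℝ, (matExp (s • N))ᵀ = matExp (s • Nᵀ) := fun s => by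
    rw [matExp, ← Matrix.exp_transpose, Matrix.transpose_smul, matExp]
  simp only [htr]
  refine eq_sum_matExp_smul_of_hasDerivAt (X := Matrix (Fin k) (Fin k) ℝ) N
    (V := fun s i => matExp (s • Nᵀ) * Matrix.of (C i) * matExp (s • N)) (fun s i => ?_) t i
    |>.trans ?_
  · refine (((hasDerivAt_matExp_smul Nᵀ s).mul_const _).mul
      (hasDerivAt_matExp_smul N s)).congr_deriv ?_
    rw [(commute_matExp_smul Nᵀ s).eq]
    calc matExp (s • Nᵀ) * Nᵀ * Matrix.of (C i) * matExp (s • N)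
          + matExp (s • Nᵀ) * Matrix.of (C i) * (N * matExp (s • N))
        = matExp (s • Nᵀ) * (Nᵀ * Matrix.of (C i) + Matrix.of (C i) * N) * matExp (s • N) := by
          noncomm_ring
      _ = _ := by
          rw [hN.transpose_mul_add_mul, Matrix.mul_sum, Matrix.sum_mul]
          simp only [Matrix.mul_smul, Matrix.smul_mul]
  · simp [matExp_zero]

theorem IsStructDerivation.sum_structConst_mul_matExp (hN : IsStructDerivation C N) (t : ℝ)
    (i p q : Fin k) :
    ∑ b, ∑ c, C i b c * (matExp (t • N) b p * matExp (t • N) c q)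
      = ∑ j, matExp (t • N) i j * C j p q := by
  have h := congrFun (congrFun (hN.transpose_matExp_mul_mul_matExp t i) p) q
  simp only [Matrix.mul_apply, Matrix.transpose_apply, Matrix.of_apply, Matrix.sum_apply,
    Matrix.smul_apply, smul_eq_mul, sum_mul] at h
  rw [← h, sum_comm]
  exact sum_congr rfl fun _ _ => sum_congr rfl fun _ _ => by ring

end Automorphism

section OneForms

variable {E : Type*} [NormedAddCommGroup E] [NormedSpace ℝ E]

theorem wedge_swap (α β : E → E →L[ℝ] ℝ) (x u v : E) :
    wedge β α x u v = -wedge α β x u v := by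
  simp only [wedge]; ring

theorem wedge_sum_smul_left {ι : Type*} [Fintype ι] (a : ι → E → ℝ) (ω : ι → E → E →L[ℝ] ℝ)
    (β : E → E →L[ℝ] ℝ) (x u v : E) :
    wedge (fun y => ∑ j, a j y • ω j y) β x u v = ∑ j, a j x * wedge (ω j) β x u v := by
  simp only [wedge, _root_.sum_apply, _root_.smul_apply, smul_eq_mul,
    sum_mul, ← sum_sub_distrib, mul_sub, mul_assoc]

theorem wedge_sum_smul_right {ι : Type*} [Fintype ι] (α : E → E →L[ℝ] ℝ) (a : ι → E → ℝ)
    (ω : ι → E → E →L[ℝ] ℝ) (x u v : E) :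
    wedge α (fun y => ∑ j, a j y • ω j y) x u v = ∑ j, a j x * wedge α (ω j) x u v := by
  rw [wedge_swap, wedge_sum_smul_left, ← sum_neg_distrib]
  simp only [wedge_swap α, mul_neg, neg_neg]

theorem extDerivOneForm_sum {ι : Type*} [Fintype ι] {ω : ι → E → E →L[ℝ] ℝ} {x : E}
    (hω : ∀ i, DifferentiableAt ℝ (ω i) x) (u v : E) :
    extDerivOneForm (fun y => ∑ i, ω i y) x u v = ∑ i, extDerivOneForm (ω i) x u v := by
  simp only [extDerivOneForm, fderiv_fun_sum fun i _ => hω i, _root_.sum_apply,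
    sum_sub_distrib]

theorem extDerivOneForm_smul {g : E → ℝ} {ω : E → E →L[ℝ] ℝ} {x : E}
    (hg : DifferentiableAt ℝ g x) (hω : DifferentiableAt ℝ ω x) (u v : E) :
    extDerivOneForm (fun y => g y • ω y) x u v
      = g x * extDerivOneForm ω x u v + wedge (fun y => fderiv ℝ g y) ω x u v := by
  simp only [extDerivOneForm, wedge, fderiv_fun_smul hg hω, _root_.add_apply,
    _root_.smul_apply, ContinuousLinearMap.smulRight_apply, smul_eq_mul]
  ring

end OneForms

section Gauge

variable {E : Type*} [NormedAddCommGroup E] [NormedSpace ℝ E] {k : ℕ}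
  {C : Fin k → Fin k → Fin k → ℝ} {N : Matrix (Fin k) (Fin k) ℝ}
  {ω : Fin k → E → E →L[ℝ] ℝ} {f : E → ℝ}

/-- The coframe `ω̂ = exp(f N) ω`. -/
noncomputable def expGauge (N : Matrix (Fin k) (Fin k) ℝ) (f : E → ℝ) (ω : Fin k → E → E →L[ℝ] ℝ)
    (i : Fin k) : E → E →L[ℝ] ℝ :=
  fun y => ∑ j, matExp (f y • N) i j • ω j y

theorem wedge_expGauge (N : Matrix (Fin k) (Fin k) ℝ) (f : E → ℝ) (ω : Fin k → E → E →L[ℝ] ℝ)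
    (b c : Fin k) (x u v : E) :
    wedge (expGauge N f ω b) (expGauge N f ω c) x u v
      = ∑ p, ∑ q, matExp (f x • N) b p * matExp (f x • N) c q * wedge (ω p) (ω q) x u v := by
  unfold expGauge
  simp only [wedge_sum_smul_left, wedge_sum_smul_right, mul_sum]
  rw [sum_comm]
  exact sum_congr rfl fun _ _ => sum_congr rfl fun _ _ => by ring

theorem extDerivOneForm_expGauge (hω : ∀ i, Differentiable ℝ (ω i)) (hf : Differentiable ℝ f)
    (a : Fin k) (x u v : E) :
    extDerivOneForm (expGauge N f ω a) x u v
      = ∑ j, (matExp (f x • N) a j * extDerivOneForm (ω j) x u v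
          + (N * matExp (f x • N)) a j * wedge (fun y => fderiv ℝ f y) (ω j) x u v) := by
  have hd : ∀ j, HasFDerivAt (fun y => matExp (f y • N) a j)
      ((N * matExp (f x • N)) a j • fderiv ℝ f x) x := fun j =>
    (hasDerivAt_matExp_smul_apply N (f x) a j).comp_hasFDerivAt x (hf x).hasFDerivAt
  unfold expGauge
  rw [extDerivOneForm_sum (ω := fun j y => matExp (f y • N) a j • ω j y)
    fun j => (hd j).differentiableAt.smul (hω j x)]
  refine sum_congr rfl fun j _ => ?_
  rw [extDerivOneForm_smul (hd j).differentiableAt (hω j x)]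
  simp only [wedge, (hd j).fderiv, _root_.smul_apply, smul_eq_mul]
  ring

theorem IsStructDerivation.structEq_expGauge (hN : IsStructDerivation C N)
    (hω : ∀ i, Differentiable ℝ (ω i)) (hSE : StructEq C ω) (hf : Differentiable ℝ f)
    (a : Fin k) (x u v : E) :
    extDerivOneForm (expGauge N f ω a) x u v
      + (1 / 2) * ∑ b, ∑ c, C a b c * wedge (expGauge N f ω b) (expGauge N f ω c) x u v
      = ∑ c, N a c * wedge (fun y => fderiv ℝ f y) (expGauge N f ω c) x u v := by
  rw [extDerivOneForm_expGauge hω hf]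
  set M := matExp (f x • N)
  set W : Fin k → Fin k → ℝ := fun p q => wedge (ω p) (ω q) x u v
  set S : Fin k → ℝ := fun j => ∑ p, ∑ q, C j p q * W p q
  have hM : ∀ i p q, ∑ b, ∑ c, C i b c * (M b p * M c q) = ∑ j, M i j * C j p q :=
    hN.sum_structConst_mul_matExp (f x)
  have hquad : ∑ b, ∑ c, C a b c * wedge (expGauge N f ω b) (expGauge N f ω c) x u v
      = ∑ j, M a j * S j := by
    calc _ = ∑ b, ∑ c, ∑ p, ∑ q, C a b c * (M b p * M c q) * W p q := by
          simp only [wedge_expGauge, mul_sum, mul_assoc]; rfl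
      _ = ∑ p, ∑ q, (∑ b, ∑ c, C a b c * (M b p * M c q)) * W p q := by
          simp only [sum_mul]
          rw [sum_comm_cycle]
          exact sum_congr rfl fun _ _ => sum_comm_cycle
      _ = ∑ j, M a j * S j := by
          simp only [S, hM, sum_mul, mul_sum, mul_assoc]
          exact sum_comm_cycle
  have hlin : ∑ c, N a c * wedge (fun y => fderiv ℝ f y) (expGauge N f ω c) x u v
      = ∑ j, (N * M) a j * wedge (fun y => fderiv ℝ f y) (ω j) x u v := by
    unfold expGauge
    simp only [wedge_sum_smul_right, Matrix.mul_apply, mul_sum, sum_mul, mul_assoc]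
    exact sum_comm
  have hSE' : ∀ j, extDerivOneForm (ω j) x u v = -(1 / 2) * S j :=
    fun j => by linarith [hSE j x u v]
  have hcancel : ∀ j, M a j * extDerivOneForm (ω j) x u v + 1 / 2 * (M a j * S j) = 0 :=
    fun j => by rw [hSE']; ring
  rw [hquad, hlin, sum_add_distrib, mul_sum, add_right_comm, ← sum_add_distrib]
  simp only [hcancel, sum_const_zero, zero_add]

end Gauge

theorem sum_sum_mul_eq_sum_sum_ite_add {k : ℕ} (ν : Fin k) {S T : Fin k → Fin k → ℝ}
    (hS : ∀ b c, S c b = -S b c) (hT : ∀ b c, T c b = -T b c) :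
    ∑ b, ∑ c, S b c * T b c
      = ∑ b, ∑ c, (if b ≠ ν ∧ c ≠ ν then S b c else 0) * T b c + 2 * ∑ c, S ν c * T ν c := by
  have hνν : S ν ν = 0 := by linarith [hS ν ν]
  have hsplit : ∀ b c, S b c * T b c = (if b ≠ ν ∧ c ≠ ν then S b c else 0) * T b c
      + (if b = ν then S b c * T b c else 0) + (if c = ν then S b c * T b c else 0) := by
    intro b c
    by_cases hb : b = ν <;> by_cases hc : c = ν <;> simp [hb, hc, hνν]
  rw [sum_congr rfl fun b _ => sum_congr rfl fun c _ => hsplit b c]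
  simp only [sum_add_distrib, sum_ite_irrel, sum_const_zero, sum_ite_eq', mem_univ, if_true]
  rw [add_assoc, two_mul]
  congr 2
  exact sum_congr rfl fun c _ => by rw [hS, hT, neg_mul_neg]

/-- Reduction via a codimension-one ideal.
If the 1-forms `ω` satisfy the structure equations of `𝔤` in a basis adapted to the
codimension-one ideal `𝔨 = span{e_1, …, e_{n-1}}`, `df = ωⁿ`, and
`ω̂ⁱ = Σ_j exp(f·[ad(eₙ)])ⁱ_j ωʲ`, then `ω̂ⁿ = ωⁿ`, `dω̂ⁿ = 0`, and `ω̂¹, …, ω̂ⁿ⁻¹`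
satisfy the structure equations of `𝔨` in the basis `(e_1, …, e_{n-1})`. -/
theorem statement0
    (n m : ℕ) (hn : 2 ≤ n)
    (L : Type) [LieRing L] [LieAlgebra ℝ L] (B : Module.Basis (Fin n) ℝ L)
    (C : Fin n → Fin n → Fin n → ℝ)
    (hC : ∀ j k, ⁅B j, B k⁆ = ∑ i, C i j k • B i)
    (hideal : ∀ x y : L, y ∈ Submodule.span ℝ (⇑B '' {i : Fin n | (i : ℕ) < n - 1}) →
      ⁅x, y⁆ ∈ Submodule.span ℝ (⇑B '' {i : Fin n | (i : ℕ) < n - 1}))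
    (ω : Fin n → (Fin m → ℝ) → (Fin m → ℝ) →L[ℝ] ℝ)
    (hω : ∀ i, ContDiff ℝ (⊤ : ℕ∞) (ω i))
    (hSE : StructEq C ω)
    (f : (Fin m → ℝ) → ℝ) (hf : ContDiff ℝ (⊤ : ℕ∞) f)
    (hdf : ∀ x, fderiv ℝ f x = ω ⟨n - 1, by omega⟩ x)
    (ωhat : Fin n → (Fin m → ℝ) → (Fin m → ℝ) →L[ℝ] ℝ)
    (hhat : ∀ i x, ωhat i x =
      ∑ j, matExp (f x • adMat C ⟨n - 1, by omega⟩) i j • ω j x) :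
    (∀ x, ωhat ⟨n - 1, by omega⟩ x = ω ⟨n - 1, by omega⟩ x) ∧
    (∀ x u v, extDerivOneForm (ωhat ⟨n - 1, by omega⟩) x u v = 0) ∧
    (∀ a : Fin n, (a : ℕ) < n - 1 → ∀ x u v,
      extDerivOneForm (ωhat a) x u v
        + (1 / 2) * ∑ b : Fin n, ∑ c : Fin n,
            (if (b : ℕ) < n - 1 ∧ (c : ℕ) < n - 1 then C a b c else 0)
              * wedge (ωhat b) (ωhat c) x u v = 0) := by
  set ν : Fin n := ⟨n - 1, by omega⟩
  have hlt : ∀ i : Fin n, (i : ℕ) < n - 1 ↔ i ≠ ν := fun i => by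
    simp only [ν, Ne, Fin.ext_iff]; omega
  have hCν : ∀ j k, C ν j k = 0 := structConst_eq_zero_of_codim_one_ideal B hC
    (fun i => by rw [Set.mem_ofPred_eq, hlt, not_not]) hideal
  have hωhat : ωhat = expGauge (adMat C ν) f ω := funext fun i => funext (hhat i)
  have hlast : ωhat ν = ω ν := funext fun x => by
    simp [hhat, matExp_smul_apply_of_row_eq_zero (adMat C ν) (hCν ν), Matrix.one_apply]
  refine ⟨fun x => by rw [hlast], fun x u v => ?_, fun a _ x u v => ?_⟩
  · simpa [hlast, hCν] using hSE ν x u v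
  · have hgauge := (isStructDerivation_adMat B hC ν).structEq_expGauge
      (fun i => (hω i).differentiable (by simp)) hSE (hf.differentiable (by simp)) a x u v
    rw [← hωhat, funext hdf, ← hlast] at hgauge
    have hsplit := sum_sum_mul_eq_sum_sum_ite_add ν (S := C a)
      (T := fun b c => wedge (ωhat b) (ωhat c) x u v) (fun b c => structConst_swap B hC a b c) (fun b c => wedge_swap _ _ x u v)
    simp only [adMat] at hgauge
    simp only [hlt]
    linarith
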